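/- Let v be an odd positive integer and let (X₁,X₂,X₃,X₄) be a Goethals–Seidel difference family in ℤ/vℤ such that X₁ is skew. Then the 4v×4v Goethals–Seidel array H = [[A₁, A₂R, A₃R, A₄R],[−A₂R, A₁, −RA₄, RA₃],[−A₃R, RA₄, A₁, −RA₂],[−A₄R, −RA₃, RA₂, A₁]], with Aᵢ = A_{Xᵢ}, is a skew-Hadamard matrix of order 4v, i.e. H is a Hadamard matrix and H + Hᵀ = 2·I₄ᵥ. -/

import Mathlib

open Finset Matrix Pointwise

/-- Number of ordered pairs `(x, y) ∈ X × X` with `x - y = d`. -/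
def diffCount {v : ℕ} (X : Finset (ZMod v)) (d : ZMod v) : ℕ :=
  ((X ×ˢ X).filter fun p => p.1 - p.2 = d).card

/-- `(X₁, X₂, X₃, X₄)` is a difference family with index `lam`. -/
def IsDiffFamily {v : ℕ} (X₁ X₂ X₃ X₄ : Finset (ZMod v)) (lam : ℕ) : Prop :=
  ∀ d : ZMod v, d ≠ 0 →
    diffCount X₁ d + diffCount X₂ d + diffCount X₃ d + diffCount X₄ d = lam

/-- `X` is skew: `ℤ/vℤ` is the disjoint union of `X`, `-X` and `{0}`. -/
def IsSkew {v : ℕ} (X : Finset (ZMod v)) : Prop :=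
  (0 : ZMod v) ∉ X ∧ (∀ a ∈ X, -a ∉ X) ∧ (∀ a : ZMod v, a ≠ 0 → a ∈ X ∨ -a ∈ X)

/-- The `±1` circulant-type matrix associated with `X ⊆ ℤ/vℤ`. -/
def blockA {v : ℕ} (X : Finset (ZMod v)) : Matrix (ZMod v) (ZMod v) ℤ :=
  fun x y => if y - x ∈ X then -1 else 1

/-- The back-diagonal matrix `R`. -/
def matR (v : ℕ) : Matrix (ZMod v) (ZMod v) ℤ :=
  fun x y => if x + y = 0 then 1 else 0

/-- Index type for a `4v × 4v` matrix built from four `v × v` blocks in each direction. -/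
abbrev Idx (v : ℕ) := (ZMod v ⊕ ZMod v) ⊕ (ZMod v ⊕ ZMod v)

/-- The Goethals–Seidel array
`[[A₁, A₂R, A₃R, A₄R], [−A₂R, A₁, −RA₄, RA₃], [−A₃R, RA₄, A₁, −RA₂], [−A₄R, −RA₃, RA₂, A₁]]`. -/
def gsArray {v : ℕ} [NeZero v] (X₁ X₂ X₃ X₄ : Finset (ZMod v)) : Matrix (Idx v) (Idx v) ℤ :=
  let A₁ := blockA X₁
  let A₂ := blockA X₂
  let A₃ := blockA X₃
  let A₄ := blockA X₄
  let R := matR v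
  Matrix.fromBlocks
    (Matrix.fromBlocks A₁ (A₂ * R) (-(A₂ * R)) A₁)
    (Matrix.fromBlocks (A₃ * R) (A₄ * R) (-(R * A₄)) (R * A₃))
    (Matrix.fromBlocks (-(A₃ * R)) (R * A₄) (-(A₄ * R)) (-(R * A₃)))
    (Matrix.fromBlocks A₁ (-(R * A₂)) (R * A₂) A₁)

section Aux

variable {v : ℕ} [NeZero v]

lemma matR_mul_apply (M : Matrix (ZMod v) (ZMod v) ℤ) (x y : ZMod v) :
    (matR v * M) x y = M (-x) y := by
  rw [Matrix.mul_apply]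
  rw [Finset.sum_eq_single (-x)]
  · simp [matR]
  · intro b _ hb
    have : x + b ≠ 0 := fun h => hb (by linear_combination h)
    simp [matR, this]
  · simp

lemma mul_matR_apply (M : Matrix (ZMod v) (ZMod v) ℤ) (x y : ZMod v) :
    (M * matR v) x y = M x (-y) := by
  rw [Matrix.mul_apply]
  rw [Finset.sum_eq_single (-y)]
  · simp [matR]
  · intro b _ hb
    have : b + y ≠ 0 := fun h => hb (by linear_combination h)
    simp [matR, this]
  · simp

omit [NeZero v] in
lemma matR_transpose : (matR v)ᵀ = matR v := by
  ext x y; simp [matR, Matrix.transpose_apply, add_comm]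

lemma matR_mul_matR : matR v * matR v = 1 := by
  ext x y
  rw [matR_mul_apply]
  simp [matR, Matrix.one_apply, neg_add_eq_zero]

lemma matR_mul_circ (u : ZMod v → ℤ) :
    matR v * circulant u = circulant (fun d => u (-d)) * matR v := by
  ext x y
  rw [matR_mul_apply, mul_matR_apply]
  simp [Matrix.circulant_apply]
  ring_nf

lemma circ_mul_matR (u : ZMod v → ℤ) :
    circulant u * matR v = matR v * circulant (fun d => u (-d)) := by
  rw [matR_mul_circ]
  simp

lemma P1 (u w : ZMod v → ℤ) :
    (circulant u * matR v) * (circulant w * matR v)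
      = circulant u * circulant (fun d => w (-d)) := by
  rw [circ_mul_matR w, ← mul_assoc, mul_assoc (circulant u), matR_mul_matR, mul_one]

lemma P2 (u w : ZMod v → ℤ) :
    (circulant u * matR v) * (matR v * circulant w) = circulant u * circulant w := by
  rw [mul_assoc, ← mul_assoc (matR v), matR_mul_matR, one_mul]

lemma P3 (u w : ZMod v → ℤ) :
    (matR v * circulant u) * (circulant w * matR v)
      = circulant (fun d => u (-d)) * circulant (fun d => w (-d)) := by
  rw [matR_mul_circ u, circ_mul_matR w, ← mul_assoc, mul_assoc (circulant fun d => u (-d)),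
    matR_mul_matR, mul_one]

lemma P4 (u w : ZMod v → ℤ) :
    (matR v * circulant u) * (matR v * circulant w)
      = circulant (fun d => u (-d)) * circulant w := by
  rw [matR_mul_circ u, mul_assoc, ← mul_assoc (matR v), matR_mul_matR, one_mul]

lemma P5 (u w : ZMod v → ℤ) :
    circulant u * (matR v * circulant w)
      = circulant u * circulant (fun d => w (-d)) * matR v := by
  rw [matR_mul_circ w, ← mul_assoc]

lemma P6 (u w : ZMod v → ℤ) :
    circulant u * (circulant w * matR v) = circulant u * circulant w * matR v := by
  rw [mul_assoc]

lemma P7 (u w : ZMod v → ℤ) :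
    (circulant u * matR v) * circulant w
      = circulant u * circulant (fun d => w (-d)) * matR v := by
  rw [mul_assoc, matR_mul_circ w, ← mul_assoc]

lemma P8 (u w : ZMod v → ℤ) :
    (matR v * circulant u) * circulant w
      = circulant (fun d => u (-d)) * circulant (fun d => w (-d)) * matR v := by
  rw [matR_mul_circ u, mul_assoc, matR_mul_circ w, ← mul_assoc]

omit [NeZero v] in
lemma circ_eta (u : ZMod v → ℤ) : circulant (fun d => u d) = circulant u := rfl

lemma fb_smul_one {n m : Type*} [DecidableEq n] [DecidableEq m] [Fintype n] [Fintype m] {c : ℤ}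
    {A : Matrix n n ℤ} {B : Matrix n m ℤ} {C : Matrix m n ℤ} {D : Matrix m m ℤ}
    (h1 : A = c • 1) (h2 : B = 0) (h3 : C = 0) (h4 : D = c • 1) :
    fromBlocks A B C D = c • 1 := by
  rw [h1, h2, h3, h4, ← Matrix.fromBlocks_one, Matrix.fromBlocks_smul]
  simp

lemma fb_zero {n m p q : Type*}
    {A : Matrix n p ℤ} {B : Matrix n q ℤ} {C : Matrix m p ℤ} {D : Matrix m q ℤ}
    (h1 : A = 0) (h2 : B = 0) (h3 : C = 0) (h4 : D = 0) :
    fromBlocks A B C D = 0 := by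
  rw [h1, h2, h3, h4, Matrix.fromBlocks_zero]

lemma gs_circ_mul_transpose (u₁ u₂ u₃ u₄ : ZMod v → ℤ) (c : ℤ)
    (H : Matrix (Idx v) (Idx v) ℤ)
    (hS : circulant u₁ * (circulant u₁)ᵀ + circulant u₂ * (circulant u₂)ᵀ
      + circulant u₃ * (circulant u₃)ᵀ + circulant u₄ * (circulant u₄)ᵀ
      = c • (1 : Matrix (ZMod v) (ZMod v) ℤ))
    (hH : H = fromBlocks
      (fromBlocks (circulant u₁) (circulant u₂ * matR v) (-(circulant u₂ * matR v)) (circulant u₁))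
      (fromBlocks (circulant u₃ * matR v) (circulant u₄ * matR v) (-(matR v * circulant u₄)) (matR v * circulant u₃))
      (fromBlocks (-(circulant u₃ * matR v)) (matR v * circulant u₄) (-(circulant u₄ * matR v)) (-(matR v * circulant u₃)))
      (fromBlocks (circulant u₁) (-(matR v * circulant u₂)) (matR v * circulant u₂) (circulant u₁))) :
    H * Hᵀ = c • 1 := by
  rw [Matrix.transpose_circulant, Matrix.transpose_circulant, Matrix.transpose_circulant,
    Matrix.transpose_circulant] at hS
  subst hH
  simp only [Matrix.fromBlocks_transpose, Matrix.transpose_neg, Matrix.transpose_mul,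
    Matrix.transpose_circulant, matR_transpose]
  rw [Matrix.fromBlocks_multiply]
  refine fb_smul_one ?_ ?_ ?_ ?_ <;>
    rw [Matrix.fromBlocks_multiply, Matrix.fromBlocks_multiply, Matrix.fromBlocks_add]
  all_goals first | refine fb_smul_one ?_ ?_ ?_ ?_ | refine fb_zero ?_ ?_ ?_ ?_
  all_goals simp only [P1,P2,P3,P4,P5,P6,P7,P8, mul_neg, neg_mul, neg_neg, circ_eta]
  all_goals first
    | (rw [← hS]; abel1)
    | (simp only [Matrix.circulant_mul_comm]; abel1)
    | abel1
    | ((try rw [Matrix.circulant_mul_comm (fun d => u₁ (-d)) u₁]);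
       (try rw [Matrix.circulant_mul_comm (fun d => u₂ (-d)) u₂]);
       (try rw [Matrix.circulant_mul_comm (fun d => u₃ (-d)) u₃]);
       (try rw [Matrix.circulant_mul_comm (fun d => u₄ (-d)) u₄]);
       rw [← hS]; abel)

lemma gs_circ_add_transpose (u₁ u₂ u₃ u₄ : ZMod v → ℤ)
    (H : Matrix (Idx v) (Idx v) ℤ)
    (h1 : circulant u₁ + (circulant u₁)ᵀ = (2 : ℤ) • (1 : Matrix (ZMod v) (ZMod v) ℤ))
    (hH : H = fromBlocks
      (fromBlocks (circulant u₁) (circulant u₂ * matR v) (-(circulant u₂ * matR v)) (circulant u₁))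
      (fromBlocks (circulant u₃ * matR v) (circulant u₄ * matR v) (-(matR v * circulant u₄)) (matR v * circulant u₃))
      (fromBlocks (-(circulant u₃ * matR v)) (matR v * circulant u₄) (-(circulant u₄ * matR v)) (-(matR v * circulant u₃)))
      (fromBlocks (circulant u₁) (-(matR v * circulant u₂)) (matR v * circulant u₂) (circulant u₁))) :
    H + Hᵀ = (2 : ℤ) • 1 := by
  rw [Matrix.transpose_circulant] at h1
  subst hH
  simp only [Matrix.fromBlocks_transpose, Matrix.transpose_neg, Matrix.transpose_mul,
    Matrix.transpose_circulant, matR_transpose]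
  rw [Matrix.fromBlocks_add]
  refine fb_smul_one ?_ ?_ ?_ ?_ <;> rw [Matrix.fromBlocks_add]
  all_goals first | refine fb_smul_one ?_ ?_ ?_ ?_ | refine fb_zero ?_ ?_ ?_ ?_
  all_goals simp only [circ_mul_matR, neg_neg, circ_eta]
  all_goals first
    | exact h1
    | abel

lemma sum_indicator (X : Finset (ZMod v)) (a : ZMod v) :
    ∑ z : ZMod v, (if z - a ∈ X then (1:ℤ) else 0) = X.card := by
  rw [Finset.sum_boole]
  norm_cast
  apply Finset.card_nbij' (fun z => z - a) (fun w => w + a)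
  · intro z hz; simpa using (Finset.mem_filter.mp hz).2
  · intro w hw; simp [Finset.mem_coe.mp hw]
  · intro z _; simp
  · intro w _; simp

lemma sum_prod_indicator (X : Finset (ZMod v)) (x y : ZMod v) :
    ∑ z : ZMod v, ((if z - x ∈ X then (1:ℤ) else 0) * (if z - y ∈ X then 1 else 0))
      = diffCount X (x - y) := by
  have h : ∀ z : ZMod v, ((if z - x ∈ X then (1:ℤ) else 0) * (if z - y ∈ X then 1 else 0))
      = if z - y ∈ X ∧ z - x ∈ X then 1 else 0 := by
    intro z; split_ifs with h1 h2 h3 <;> simp_all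
  rw [Finset.sum_congr rfl (fun z _ => h z), Finset.sum_boole]
  norm_cast
  unfold diffCount
  apply Finset.card_nbij' (fun z => (z - y, z - x)) (fun p => p.1 + y)
  · intro z hz
    simp only [Finset.mem_coe, Finset.mem_filter, Finset.mem_univ, true_and] at hz
    simp [Finset.mem_filter, Finset.mem_product, hz.1, hz.2]
  · intro p hp
    simp only [Finset.mem_coe, Finset.mem_filter, Finset.mem_product] at hp
    have h2 : p.2 = p.1 + y - x := by linear_combination -hp.2
    simp only [Finset.mem_coe, Finset.mem_filter, Finset.mem_univ, true_and]
    constructor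
    · simpa using hp.1.1
    · rw [show p.1 + y - x = p.2 by rw [h2]]; exact hp.1.2
  · intro z _; simp
  · intro p hp
    simp only [Finset.mem_coe, Finset.mem_filter, Finset.mem_product] at hp
    have h2 : p.2 = p.1 + y - x := by linear_combination -hp.2
    ext <;> simp [h2]

omit [NeZero v] in
lemma diffCount_zero (X : Finset (ZMod v)) : diffCount X 0 = X.card := by
  unfold diffCount
  apply Finset.card_nbij' (fun p => p.1) (fun a => (a, a))
  · intro p hp
    simp only [Finset.mem_coe, Finset.mem_filter, Finset.mem_product] at hp
    exact hp.1.1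
  · intro a ha; simp [Finset.mem_filter, Finset.mem_product, Finset.mem_coe.mp ha]
  · intro p hp
    simp only [Finset.mem_coe, Finset.mem_filter, Finset.mem_product] at hp
    have := sub_eq_zero.mp hp.2
    ext <;> simp [this]
  · intro a _; simp

lemma AAt_apply (X : Finset (ZMod v)) (x y : ZMod v) :
    (blockA X * (blockA X)ᵀ) x y
      = (v : ℤ) - 4 * X.card + 4 * diffCount X (x - y) := by
  rw [Matrix.mul_apply]
  simp only [Matrix.transpose_apply, blockA]
  have h : ∀ z : ZMod v,
      ((if z - x ∈ X then (-1:ℤ) else 1) * (if z - y ∈ X then (-1:ℤ) else 1))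
      = 1 - 2 * (if z - x ∈ X then (1:ℤ) else 0) - 2 * (if z - y ∈ X then (1:ℤ) else 0)
        + 4 * ((if z - x ∈ X then (1:ℤ) else 0) * (if z - y ∈ X then (1:ℤ) else 0)) := by
    intro z; split_ifs <;> ring
  rw [Finset.sum_congr rfl (fun z _ => h z)]
  rw [Finset.sum_add_distrib, Finset.sum_sub_distrib, Finset.sum_sub_distrib,
    ← Finset.mul_sum, ← Finset.mul_sum, ← Finset.mul_sum,
    sum_indicator, sum_indicator, sum_prod_indicator]
  simp [Finset.card_univ, ZMod.card]
  ring

omit [NeZero v] in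
lemma blockA_circ (X : Finset (ZMod v)) :
    blockA X = circulant (fun d => if -d ∈ X then (-1:ℤ) else 1) := by
  ext x y; simp [blockA, Matrix.circulant_apply, neg_sub]

lemma blockA_pm (X : Finset (ZMod v)) (x y : ZMod v) :
    blockA X x y = 1 ∨ blockA X x y = -1 := by
  unfold blockA; split_ifs <;> simp

end Aux

/-- A Goethals–Seidel difference family whose first block is skew yields a skew-Hadamard
matrix of order `4v`. -/
theorem gsArray_skew_hadamard (v : ℕ) [NeZero v] (hodd : Odd v) (hpos : 0 < v)
    (X₁ X₂ X₃ X₄ : Finset (ZMod v)) (k₁ k₂ k₃ k₄ lam : ℕ)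
    (hc1 : X₁.card = k₁) (hc2 : X₂.card = k₂) (hc3 : X₃.card = k₃) (hc4 : X₄.card = k₄)
    (hDF : IsDiffFamily X₁ X₂ X₃ X₄ lam)
    (hGS : k₁ + k₂ + k₃ + k₄ = lam + v)
    (hskew : IsSkew X₁) :
    (∀ i j, gsArray X₁ X₂ X₃ X₄ i j = 1 ∨ gsArray X₁ X₂ X₃ X₄ i j = -1) ∧
    gsArray X₁ X₂ X₃ X₄ * (gsArray X₁ X₂ X₃ X₄)ᵀ =
      (4 * (v : ℤ)) • (1 : Matrix (Idx v) (Idx v) ℤ) ∧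
    gsArray X₁ X₂ X₃ X₄ + (gsArray X₁ X₂ X₃ X₄)ᵀ =
      (2 : ℤ) • (1 : Matrix (Idx v) (Idx v) ℤ) := by
  have hH : gsArray X₁ X₂ X₃ X₄ = fromBlocks
      (fromBlocks (circulant (fun d => if -d ∈ X₁ then (-1:ℤ) else 1)) (circulant (fun d => if -d ∈ X₂ then (-1:ℤ) else 1) * matR v) (-(circulant (fun d => if -d ∈ X₂ then (-1:ℤ) else 1) * matR v)) (circulant (fun d => if -d ∈ X₁ then (-1:ℤ) else 1)))
      (fromBlocks (circulant (fun d => if -d ∈ X₃ then (-1:ℤ) else 1) * matR v) (circulant (fun d => if -d ∈ X₄ then (-1:ℤ) else 1) * matR v) (-(matR v * circulant (fun d => if -d ∈ X₄ then (-1:ℤ) else 1))) (matR v * circulant (fun d => if -d ∈ X₃ then (-1:ℤ) else 1)))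
      (fromBlocks (-(circulant (fun d => if -d ∈ X₃ then (-1:ℤ) else 1) * matR v)) (matR v * circulant (fun d => if -d ∈ X₄ then (-1:ℤ) else 1)) (-(circulant (fun d => if -d ∈ X₄ then (-1:ℤ) else 1) * matR v)) (-(matR v * circulant (fun d => if -d ∈ X₃ then (-1:ℤ) else 1))))
      (fromBlocks (circulant (fun d => if -d ∈ X₁ then (-1:ℤ) else 1)) (-(matR v * circulant (fun d => if -d ∈ X₂ then (-1:ℤ) else 1))) (matR v * circulant (fun d => if -d ∈ X₂ then (-1:ℤ) else 1)) (circulant (fun d => if -d ∈ X₁ then (-1:ℤ) else 1))) := by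
    simp only [gsArray, blockA_circ]
  have hSum : blockA X₁ * (blockA X₁)ᵀ + blockA X₂ * (blockA X₂)ᵀ + blockA X₃ * (blockA X₃)ᵀ
      + blockA X₄ * (blockA X₄)ᵀ = (4 * (v:ℤ)) • (1 : Matrix (ZMod v) (ZMod v) ℤ) := by
    ext x y
    simp only [Matrix.add_apply, AAt_apply, Matrix.smul_apply, Matrix.one_apply, smul_eq_mul]
    by_cases hxy : x = y
    · subst hxy
      simp only [sub_self, diffCount_zero, if_pos rfl, mul_one]
      push_cast
      ring
    · have hd : x - y ≠ 0 := sub_ne_zero_of_ne hxy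
      have hDF' := hDF (x - y) hd
      rw [if_neg hxy, mul_zero]
      rw [hc1, hc2, hc3, hc4]
      have hGS' : (k₁ : ℤ) + k₂ + k₃ + k₄ = lam + v := by exact_mod_cast hGS
      have hDF'' : (diffCount X₁ (x-y) : ℤ) + diffCount X₂ (x-y) + diffCount X₃ (x-y)
          + diffCount X₄ (x-y) = lam := by exact_mod_cast hDF'
      linarith
  have hA1 : blockA X₁ + (blockA X₁)ᵀ = (2 : ℤ) • (1 : Matrix (ZMod v) (ZMod v) ℤ) := by
    ext x y
    simp only [Matrix.add_apply, Matrix.transpose_apply, blockA, Matrix.smul_apply,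
      Matrix.one_apply, smul_eq_mul]
    by_cases hxy : x = y
    · subst hxy
      simp [hskew.1]
    · have h1 : y - x ≠ 0 := sub_ne_zero_of_ne (Ne.symm hxy)
      have hxy' : x - y = -(y - x) := by ring
      rw [if_neg hxy, mul_zero]
      rcases hskew.2.2 (y - x) h1 with h | h
      · rw [if_pos h, hxy', if_neg (hskew.2.1 _ h)]; ring
      · have h2 : y - x ∉ X₁ := fun hc => hskew.2.1 _ hc h
        rw [if_neg h2, hxy', if_pos h]; ring
  refine ⟨?_, ?_, ?_⟩
  · intro i j
    rcases i with (i|i)|(i|i) <;> rcases j with (j|j)|(j|j) <;>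
      simp only [gsArray, Matrix.fromBlocks_apply₁₁, Matrix.fromBlocks_apply₁₂,
        Matrix.fromBlocks_apply₂₁, Matrix.fromBlocks_apply₂₂, Matrix.neg_apply,
        mul_matR_apply, matR_mul_apply, blockA] <;>
      split_ifs <;> simp
  · refine gs_circ_mul_transpose _ _ _ _ (4 * (v:ℤ)) _ ?_ hH
    simpa only [blockA_circ] using hSum
  · refine gs_circ_add_transpose _ _ _ _ _ ?_ hH
    simpa only [blockA_circ] using hA1
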